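/- For integers m > l ≥ 2 and p ≥ 2, the currency A_{l,m}(p) = (a_0, a_1, …, a_m) defined by a_i = i + 1 for 0 ≤ i ≤ l − 1 (so the first l coins are 1, 2, …, l) and a_{l+i} = ((i+1)·p − i)·l for 0 ≤ i ≤ m − l is totally orderly. Moreover, if p > m − l, then ⌈a_m / a_l⌉ = m − l + 1. -/

import Mathlib

/-!
For a currency with `a 0 = 1`, greedy is optimal exactly when adding any single coin to an
amount raises the greedy count by at most one. This holds for the arithmetic progression
`1, 1 + d, …, 1 + n d`, whose greedy count has a closed form, and it passes from a currency `b`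
to `1, 2, …, l - 1, l b₀, l b₁, …`, whose greedy count on `c` is that of `b` on `c / l`, plus one
when `l ∤ c`. The prefixes of `A_{l,m}(p)` from index `l - 1` on arise this way from the
progression with difference `p - 1`; the shorter ones are progressions with difference `1`.
-/

/-- The largest coin of the currency with coins `a 0, …, a k` that is `≤ c`
(or `0` if there is none). -/
def bestCoin (a : ℕ → ℕ) (k : ℕ) (c : ℕ) : ℕ :=
  ((Finset.range (k + 1)).filter fun j => a j ≤ c).sup a

/-- The number of coins used by the greedy algorithm to pay the amount `c`,
using the currency with coins `a 0, …, a k`. -/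
def grd (a : ℕ → ℕ) (k : ℕ) : ℕ → ℕ
  | 0 => 0
  | c + 1 =>
    if h : 1 ≤ bestCoin a k (c + 1) then
      grd a k (c + 1 - bestCoin a k (c + 1)) + 1
    else 0
  decreasing_by omega

/-- The minimal number of coins needed to pay the amount `c`,
using the currency with coins `a 0, …, a k`. -/
noncomputable def opt (a : ℕ → ℕ) (k : ℕ) (c : ℕ) : ℕ :=
  sInf {n | ∃ x : Fin (k + 1) → ℕ, (∑ i, x i) = n ∧ (∑ i, x i * a i.1) = c}

/-- `a 0, …, a k` is a currency: it starts with the coin `1` and is strictly increasing. -/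
def IsCurrency (a : ℕ → ℕ) (k : ℕ) : Prop :=
  a 0 = 1 ∧ ∀ i j : ℕ, i < j → j ≤ k → a i < a j

/-- The currency with coins `a 0, …, a k` is orderly: the greedy payment is
optimal for every positive amount. -/
def Orderly (a : ℕ → ℕ) (k : ℕ) : Prop :=
  ∀ c : ℕ, 0 < c → opt a k c = grd a k c

/-- The set `𝒜(a) = ⋃_{m ≥ 1} {m·a − l : 0 ≤ l ≤ m}`. -/
def calA (a : ℕ) : Set ℕ :=
  {x | ∃ m l : ℕ, 1 ≤ m ∧ l ≤ m ∧ x = m * a - l}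


section Greedy

variable {a : ℕ → ℕ} {k : ℕ}

lemma le_bestCoin {i c : ℕ} (hi : i ≤ k) (hc : a i ≤ c) : a i ≤ bestCoin a k c :=
  Finset.le_sup (f := a) (Finset.mem_filter.2 ⟨Finset.mem_range.2 (by omega), hc⟩)

lemma bestCoin_le (c : ℕ) : bestCoin a k c ≤ c :=
  Finset.sup_le fun _ hi => (Finset.mem_filter.1 hi).2

lemma exists_bestCoin_eq (h0 : a 0 = 1) {c : ℕ} (hc : 0 < c) :
    ∃ i ≤ k, bestCoin a k c = a i := by
  obtain ⟨i, hi, h⟩ := Finset.exists_mem_eq_sup ((Finset.range (k + 1)).filter fun j => a j ≤ c)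
    ⟨0, Finset.mem_filter.2 ⟨Finset.mem_range.2 (by omega), by omega⟩⟩ a
  exact ⟨i, Nat.lt_succ_iff.1 (Finset.mem_range.1 (Finset.mem_filter.1 hi).1), h⟩

lemma bestCoin_eq_of_forall_le {i c : ℕ} (hi : i ≤ k) (hc : a i ≤ c)
    (hmax : ∀ j ≤ k, a j ≤ c → a j ≤ a i) : bestCoin a k c = a i := by
  refine le_antisymm (Finset.sup_le fun j hj => ?_) (le_bestCoin hi hc)
  obtain ⟨hj, hjc⟩ := Finset.mem_filter.1 hj
  exact hmax j (Nat.lt_succ_iff.1 (Finset.mem_range.1 hj)) hjc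

lemma grd_eq_of_bestCoin {c b : ℕ} (hb : bestCoin a k c = b) (hb0 : 0 < b) :
    grd a k c = grd a k (c - b) + 1 := by
  have := bestCoin_le (a := a) (k := k) c
  obtain ⟨c, rfl⟩ : ∃ c', c = c' + 1 := ⟨c - 1, by omega⟩
  rw [grd, hb, dif_pos (show 1 ≤ b from hb0)]

lemma opt_zero : opt a k 0 = 0 := by
  refine Nat.sInf_eq_zero.2 (Or.inl ?_)
  exact ⟨0, by simp, by simp⟩

lemma exists_repr_opt (h0 : a 0 = 1) (c : ℕ) :
    ∃ x : Fin (k + 1) → ℕ, ∑ i, x i = opt a k c ∧ ∑ i, x i * a i.1 = c := by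
  have hne : {n | ∃ x : Fin (k + 1) → ℕ, ∑ i, x i = n ∧ ∑ i, x i * a i.1 = c}.Nonempty :=
    ⟨c, Pi.single 0 c, by simp, by simp [Pi.single_apply, h0]⟩
  exact Nat.sInf_mem hne

lemma opt_add_coin_le (h0 : a 0 = 1) (u : ℕ) {i : ℕ} (hi : i ≤ k) :
    opt a k (u + a i) ≤ opt a k u + 1 := by
  obtain ⟨x, hx, hxu⟩ := exists_repr_opt h0 u
  refine Nat.sInf_le ⟨x + Pi.single ⟨i, by omega⟩ 1, ?_, ?_⟩
  · simp [Finset.sum_add_distrib, hx]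
  · simp [add_mul, Finset.sum_add_distrib, hxu, Pi.single_apply]

lemma opt_le_grd (h0 : a 0 = 1) (c : ℕ) : opt a k c ≤ grd a k c := by
  induction c using Nat.strong_induction_on with
  | _ c ih =>
    rcases Nat.eq_zero_or_pos c with rfl | hc
    · simp [opt_zero]
    obtain ⟨i, hi, hbi⟩ := exists_bestCoin_eq (k := k) h0 hc
    have hai : 0 < a i := by
      have := le_bestCoin (a := a) (k := k) (Nat.zero_le k) (show a 0 ≤ c by omega)
      omega
    have hic : a i ≤ c := hbi ▸ bestCoin_le c
    calc opt a k c = opt a k (c - a i + a i) := by rw [Nat.sub_add_cancel hic]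
      _ ≤ opt a k (c - a i) + 1 := opt_add_coin_le h0 _ hi
      _ ≤ grd a k (c - a i) + 1 := by gcongr; exact ih _ (by omega)
      _ = grd a k c := (grd_eq_of_bestCoin hbi hai).symm

lemma grd_add_mul_coin_le (H : ∀ u, ∀ i ≤ k, grd a k (u + a i) ≤ grd a k u + 1) (u : ℕ)
    {i : ℕ} (hi : i ≤ k) (n : ℕ) : grd a k (u + n * a i) ≤ grd a k u + n := by
  induction n with
  | zero => simp
  | succ n ih =>
    calc grd a k (u + (n + 1) * a i) = grd a k (u + n * a i + a i) := by ring_nf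
      _ ≤ grd a k u + (n + 1) := by have := H (u + n * a i) i hi; omega

lemma grd_sum_le (H : ∀ u, ∀ i ≤ k, grd a k (u + a i) ≤ grd a k u + 1)
    (x : Fin (k + 1) → ℕ) (s : Finset (Fin (k + 1))) :
    grd a k (∑ i ∈ s, x i * a i) ≤ ∑ i ∈ s, x i := by
  induction s using Finset.induction_on with
  | empty => simp [grd]
  | insert j s hj ih =>
    rw [Finset.sum_insert hj, Finset.sum_insert hj, add_comm]
    have := grd_add_mul_coin_le H (∑ i ∈ s, x i * a i) (Nat.lt_succ_iff.1 j.2) (x j)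
    omega

theorem orderly_iff_grd_add_coin_le (h0 : a 0 = 1) :
    Orderly a k ↔ ∀ u, ∀ i ≤ k, grd a k (u + a i) ≤ grd a k u + 1 := by
  constructor
  · intro ho
    have hgrd : ∀ c, grd a k c = opt a k c := fun c =>
      c.eq_zero_or_pos.elim (fun hc => by simp [hc, grd, opt_zero]) fun hc => (ho c hc).symm
    intro u i hi
    rw [hgrd, hgrd]
    exact opt_add_coin_le h0 u hi
  · intro H c _
    refine le_antisymm (opt_le_grd h0 c) (le_csInf ⟨_, exists_repr_opt h0 c⟩ ?_)
    rintro n ⟨x, rfl, rfl⟩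
    exact grd_sum_le H x Finset.univ

end Greedy

lemma orderly_congr {a b : ℕ → ℕ} {k : ℕ} (h : ∀ i ≤ k, a i = b i) :
    Orderly a k ↔ Orderly b k := by
  have hbest : bestCoin a k = bestCoin b k := by
    funext c
    refine Finset.sup_congr (Finset.filter_congr fun i hi => ?_) fun i hi => ?_
    · rw [h i (Nat.lt_succ_iff.1 (Finset.mem_range.1 hi))]
    · exact h i (Nat.lt_succ_iff.1 (Finset.mem_range.1 (Finset.mem_filter.1 hi).1))
  have hgrd : grd a k = grd b k := by
    funext c
    induction c using Nat.strong_induction_on with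
    | _ c ih =>
      cases c with
      | zero => simp [grd]
      | succ c =>
        rw [grd, grd, hbest]
        split_ifs
        · rw [ih _ (by omega)]
        · rfl
  have hopt : opt a k = opt b k := by
    have hsum : ∀ x : Fin (k + 1) → ℕ, ∑ i, x i * a i.1 = ∑ i, x i * b i.1 := fun x =>
      Finset.sum_congr rfl fun i _ => by rw [h i.1 (by omega)]
    funext c
    simp only [opt, hsum]
  simp only [Orderly, hopt, hgrd]

def scaledCurrency (l : ℕ) (b : ℕ → ℕ) (i : ℕ) : ℕ :=
  if i + 1 < l then i + 1 else l * b (i + 1 - l)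

section Scaled

variable {l : ℕ} {b : ℕ → ℕ} {n : ℕ}

lemma bestCoin_scaledCurrency_of_lt {c : ℕ} (hc : 0 < c) (hcl : c < l) :
    bestCoin (scaledCurrency l b) (n + l - 1) c = c := by
  have hcoin : scaledCurrency l b (c - 1) = c := by
    rw [scaledCurrency, if_pos (by omega)]
    omega
  exact (bestCoin_eq_of_forall_le (by omega) hcoin.le fun _ _ hj => hj.trans hcoin.ge).trans hcoin

lemma bestCoin_scaledCurrency_of_le (hb0 : b 0 = 1) (hl : 0 < l) {c : ℕ} (hlc : l ≤ c) :
    bestCoin (scaledCurrency l b) (n + l - 1) c = l * bestCoin b n (c / l) := by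
  have hQ : 0 < c / l := Nat.div_pos hlc hl
  obtain ⟨i, hi, hbi⟩ := exists_bestCoin_eq (k := n) hb0 hQ
  have hbi0 : 1 ≤ b i := hbi ▸ hb0 ▸ le_bestCoin (Nat.zero_le n) (by omega)
  have hcoin : scaledCurrency l b (i + l - 1) = l * b i := by
    rw [scaledCurrency, if_neg (by omega), show i + l - 1 + 1 - l = i by omega]
  rw [hbi, ← hcoin]
  refine bestCoin_eq_of_forall_le (by omega) ?_ fun j _ hj => ?_
  · calc scaledCurrency l b (i + l - 1) = l * b i := hcoin
      _ ≤ l * (c / l) := Nat.mul_le_mul_left l (hbi ▸ bestCoin_le (c / l))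
      _ ≤ c := Nat.mul_div_le c l
  rw [hcoin]
  unfold scaledCurrency at hj ⊢
  split_ifs at hj ⊢ with hjl
  · nlinarith
  · have hb : b (j + 1 - l) ≤ c / l := (Nat.le_div_iff_mul_le hl).2 (by linarith)
    exact Nat.mul_le_mul_left l (hbi ▸ le_bestCoin (by omega) hb)

lemma grd_scaledCurrency (hb0 : b 0 = 1) (hl : 0 < l) (c : ℕ) :
    grd (scaledCurrency l b) (n + l - 1) c = grd b n (c / l) + if c % l = 0 then 0 else 1 := by
  induction c using Nat.strong_induction_on with
  | _ c ih =>
    rcases Nat.eq_zero_or_pos c with rfl | hc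
    · simp [grd]
    rcases lt_or_ge c l with hcl | hlc
    · rw [grd_eq_of_bestCoin (bestCoin_scaledCurrency_of_lt hc hcl) hc, Nat.sub_self,
        Nat.div_eq_of_lt hcl, Nat.mod_eq_of_lt hcl, if_neg hc.ne']
      simp [grd]
    · have hβ : 1 ≤ bestCoin b n (c / l) := by
        have := le_bestCoin (a := b) (k := n) (Nat.zero_le n)
          (show b 0 ≤ c / l by rw [hb0]; exact (Nat.one_le_div_iff hl).2 hlc)
        omega
      have hlβ : l * bestCoin b n (c / l) ≤ c :=
        (Nat.mul_le_mul_left l (bestCoin_le (c / l))).trans (Nat.mul_div_le c l)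
      rw [grd_eq_of_bestCoin (bestCoin_scaledCurrency_of_le hb0 hl hlc) (Nat.mul_pos hl hβ),
        ih _ (Nat.sub_lt hc (Nat.mul_pos hl hβ)), Nat.sub_mul_div, Nat.sub_mul_mod hlβ,
        grd_eq_of_bestCoin rfl hβ (c := c / l)]
      omega

theorem orderly_scaledCurrency (hb0 : b 0 = 1) (hl : 0 < l) (hb : Orderly b n) :
    Orderly (scaledCurrency l b) (n + l - 1) := by
  have hstep := (orderly_iff_grd_add_coin_le hb0).1 hb
  have h0 : scaledCurrency l b 0 = 1 := by
    rcases Nat.lt_or_ge 1 l with h | h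
    · simp [scaledCurrency, h]
    · obtain rfl : l = 1 := by omega
      simp [scaledCurrency, hb0]
  refine (orderly_iff_grd_add_coin_le h0).2 fun u i hi => ?_
  simp only [grd_scaledCurrency hb0 hl]
  have hu := Nat.div_add_mod u l
  have hr := Nat.mod_lt u hl
  by_cases hil : i + 1 < l
  · rw [scaledCurrency, if_pos hil]
    have hQ := hstep (u / l) 0 (Nat.zero_le n)
    rw [hb0] at hQ
    rcases lt_or_ge (u % l + (i + 1)) l with hcarry | hcarry
    · obtain ⟨hq, hr'⟩ := (Nat.div_mod_unique hl).2
        ⟨(by omega : u % l + (i + 1) + l * (u / l) = u + (i + 1)), hcarry⟩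
      rw [hq, hr']
      split_ifs <;> omega
    · obtain ⟨hq, hr'⟩ := (Nat.div_mod_unique hl).2
        ⟨(by rw [mul_add]; omega : u % l + (i + 1) - l + l * (u / l + 1) = u + (i + 1)),
          (by omega : u % l + (i + 1) - l < l)⟩
      rw [hq, hr']
      split_ifs <;> omega
  · rw [scaledCurrency, if_neg hil, Nat.add_mul_div_left _ _ hl, Nat.add_mul_mod_self_left]
    have := hstep (u / l) (i + 1 - l) (by omega)
    split_ifs <;> omega

end Scaled

def arithCurrency (d i : ℕ) : ℕ := i * d + 1

/-- Greedy count in `arithCurrency d` of an amount `R` below the top coin: the coin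
`((R - 1) / d) * d + 1`, then `(R - 1) % d` unit coins. -/
def arithRem (d R : ℕ) : ℕ := if R = 0 then 0 else (R - 1) % d + 1

section Arith

variable {d n : ℕ}

lemma arithRem_of_lt {R : ℕ} (hR : R < d) : arithRem d R = R := by
  unfold arithRem
  split_ifs with h
  · exact h.symm
  · rw [Nat.mod_eq_of_lt (by omega)]
    omega

lemma mod_le_arithRem (R : ℕ) : R % d ≤ arithRem d R := by
  unfold arithRem
  split_ifs with h
  · simp [h]
  · calc R % d = ((R - 1) % d + 1 % d) % d := by
          rw [← Nat.add_mod, Nat.sub_add_cancel (by omega)]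
      _ ≤ (R - 1) % d + 1 % d := Nat.mod_le _ _
      _ ≤ (R - 1) % d + 1 := by gcongr; exact Nat.mod_le 1 d

lemma arithRem_add_mul {R : ℕ} (hR : 0 < R) (m : ℕ) :
    arithRem d (R + m * d) = arithRem d R := by
  unfold arithRem
  rw [if_neg (by omega), if_neg (by omega), Nat.sub_add_comm hR, Nat.add_mul_mod_self_right]

lemma grd_arithCurrency (Q : ℕ) :
    grd (arithCurrency d) n Q = Q / (n * d + 1) + arithRem d (Q % (n * d + 1)) := by
  induction Q using Nat.strong_induction_on with
  | _ Q ih =>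
    rcases Nat.eq_zero_or_pos Q with rfl | hQ
    · simp [grd, arithRem]
    have hB : 0 < n * d + 1 := by omega
    rcases lt_or_ge Q (n * d + 1) with hQB | hBQ
    · have hd : 0 < d := Nat.pos_of_ne_zero fun hd => by simp [hd] at hQB; omega
      set t := (Q - 1) / d
      have hrem : t * d + (Q - 1) % d = Q - 1 := Nat.div_add_mod' (Q - 1) d
      have hbest : bestCoin (arithCurrency d) n Q = t * d + 1 := by
        refine bestCoin_eq_of_forall_le (i := t) (Nat.div_le_of_le_mul (by rw [mul_comm]; omega))
          (by unfold arithCurrency; omega) fun j _ hj => ?_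
        have : j ≤ t := (Nat.le_div_iff_mul_le hd).2 (by unfold arithCurrency at hj; omega)
        exact Nat.succ_le_succ (Nat.mul_le_mul_right d this)
      have hR : (Q - 1) % d < n * d + 1 := by have := Nat.mod_le (Q - 1) d; omega
      rw [grd_eq_of_bestCoin hbest (by omega), show Q - (t * d + 1) = (Q - 1) % d by omega,
        ih _ (by omega), Nat.div_eq_of_lt hR, Nat.mod_eq_of_lt hR,
        arithRem_of_lt (Nat.mod_lt _ hd), Nat.div_eq_of_lt hQB, Nat.mod_eq_of_lt hQB, arithRem,
        if_neg hQ.ne']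
      omega
    · have hbest : bestCoin (arithCurrency d) n Q = n * d + 1 :=
        bestCoin_eq_of_forall_le le_rfl hBQ fun j hj _ =>
          Nat.succ_le_succ (Nat.mul_le_mul_right d hj)
      rw [grd_eq_of_bestCoin hbest hB, ih _ (by omega), Nat.div_eq_sub_div hB hBQ,
        Nat.mod_eq_sub_mod hBQ]
      omega

lemma grd_arithCurrency_add_coin_le (u : ℕ) {i : ℕ} (hi : i ≤ n) :
    grd (arithCurrency d) n (u + arithCurrency d i) ≤ grd (arithCurrency d) n u + 1 := by
  have hB : 0 < n * d + 1 := by omega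
  have hdiv : ∀ q R, R < n * d + 1 →
      grd (arithCurrency d) n ((n * d + 1) * q + R) = q + arithRem d R := fun q R hR => by
    obtain ⟨hq, hR⟩ := (Nat.div_mod_unique hB).2 ⟨add_comm R _, hR⟩
    rw [grd_arithCurrency, hq, hR]
  have hnd : n * d = i * d + (n - i) * d := by rw [← Nat.add_mul, Nat.add_sub_cancel' hi]
  obtain ⟨q, R, hR, rfl⟩ : ∃ q R, R < n * d + 1 ∧ u = (n * d + 1) * q + R :=
    ⟨u / (n * d + 1), u % (n * d + 1), Nat.mod_lt _ hB, (Nat.div_add_mod u _).symm⟩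
  rw [hdiv q R hR, arithCurrency]
  rcases lt_or_ge (R + (i * d + 1)) (n * d + 1) with hcarry | hcarry
  · rw [add_assoc, hdiv q _ hcarry, ← add_assoc, arithRem, if_neg (by omega),
      Nat.add_sub_cancel, Nat.add_mul_mod_self_right]
    have := mod_le_arithRem (d := d) R
    omega
  · have hsplit :
        (n * d + 1) * q + R + (i * d + 1) = (n * d + 1) * (q + 1) + (R - (n - i) * d) := by
      rw [mul_add]; omega
    rw [hsplit, hdiv _ _ (by omega)]
    rcases Nat.eq_zero_or_pos (R - (n - i) * d) with h | h
    · rw [h, arithRem, if_pos rfl]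
      omega
    · have := arithRem_add_mul (d := d) h (n - i)
      rw [Nat.sub_add_cancel (by omega)] at this
      omega

theorem orderly_arithCurrency : Orderly (arithCurrency d) n :=
  (orderly_iff_grd_add_coin_le (by simp [arithCurrency])).2 fun u _ hi =>
    grd_arithCurrency_add_coin_le u hi

end Arith

lemma A_coins_eq_scaledCurrency {l p : ℕ} (hl : 0 < l) (hp : 0 < p) :
    (fun i => if i ≤ l - 1 then i + 1 else ((i - l + 1) * p - (i - l)) * l) =
      scaledCurrency l (arithCurrency (p - 1)) := by
  funext i
  unfold scaledCurrency arithCurrency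
  by_cases hil : i + 1 < l
  · rw [if_pos (by omega), if_pos hil]
  rw [if_neg hil]
  by_cases hi : i = l - 1
  · rw [if_pos hi.le, show i + 1 - l = 0 by omega]
    omega
  obtain ⟨t, rfl⟩ : ∃ t, i = l + t := ⟨i - l, by omega⟩
  obtain ⟨q, rfl⟩ : ∃ q, p = q + 1 := ⟨p - 1, by omega⟩
  rw [if_neg (by omega), show l + t + 1 - l = t + 1 by omega, Nat.add_sub_cancel_left,
    Nat.add_sub_cancel, show (t + 1) * (q + 1) = (t + 1) * q + 1 + t by ring, mul_comm,
    Nat.add_sub_cancel]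

lemma coin_ratio_ceil_eq {l p s : ℕ} (hl : 0 < l) (hsp : s < p) :
    (((s + 1) * p - s) * l + p * l - 1) / (p * l) = s + 1 := by
  have hx : ((s + 1) * p - s) * l + s * l = (s + 1) * (p * l) := by
    rw [← Nat.add_mul, Nat.sub_add_cancel (by nlinarith)]
    ring
  have hsl : s * l + l ≤ p * l := by nlinarith
  have hnext : (s + 1 + 1) * (p * l) = (s + 1) * (p * l) + p * l := by ring
  exact Nat.div_eq_of_lt_le (by omega) (by omega)

/-- For `m > l ≥ 2` and `p ≥ 2`, the currency `A_{l,m}(p)` with coins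
`1, 2, …, l, pl, (2p-1)l, (3p-2)l, …, ((m-l+1)p-(m-l))l` is totally orderly;
moreover if `p > m - l` then `⌈a m / a l⌉ = m - l + 1`. -/
theorem A_family (l m p : ℕ) (hl : 2 ≤ l) (hlm : l < m) (hp : 2 ≤ p) :
    (∀ j ≤ m, Orderly (fun i => if i ≤ l - 1 then i + 1
      else ((i - l + 1) * p - (i - l)) * l) j) ∧
    (m - l < p →
      (((fun i => if i ≤ l - 1 then i + 1
          else ((i - l + 1) * p - (i - l)) * l) m) +
        ((fun i => if i ≤ l - 1 then i + 1
          else ((i - l + 1) * p - (i - l)) * l) l) - 1) /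
        ((fun i => if i ≤ l - 1 then i + 1
          else ((i - l + 1) * p - (i - l)) * l) l) = m - l + 1) := by
  refine ⟨fun j _ => ?_, fun hmlp => ?_⟩
  · rw [A_coins_eq_scaledCurrency (by omega) (by omega)]
    rcases lt_or_ge (j + 1) l with hjl | hjl
    · refine (orderly_congr fun i hi => ?_).2 (orderly_arithCurrency (d := 1))
      simp [scaledCurrency, arithCurrency, show i + 1 < l by omega]
    · have := orderly_scaledCurrency (l := l) (n := j + 1 - l) (by simp [arithCurrency])
        (by omega) (orderly_arithCurrency (d := p - 1))
      rwa [show j + 1 - l + l - 1 = j by omega] at this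
  · dsimp only
    rw [if_neg (by omega), if_neg (by omega), Nat.sub_self, zero_add, one_mul, Nat.sub_zero]
    exact coin_ratio_ceil_eq (by omega) hmlp
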